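/- arXiv:2509.01358 — 3 statements merged into one kernel-verified Lean document; each statement's English description precedes it below -/
import Mathlib

section
/- Any pure strategy profile of a Bayesian game that is perfect must be a Bayesian Nash equilibrium. -/
/-!
Statement 5 (Lemma `lem-admissibility` (1)): Any pure strategy profile of a Bayesian game
that is perfect must be a Bayesian Nash equilibrium.
-/

open MeasureTheory Filter Metric

namespace MonotonePerfection

noncomputable section

/-- The Prohorov (Lévy–Prokhorov) distance between two Borel measures. -/
def prohorovDist {Ω : Type*} [MeasurableSpace Ω] [PseudoMetricSpace Ω]
    (μ ν : Measure Ω) : ℝ :=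
  sInf {ε : ℝ |
    ∀ B : Set Ω, MeasurableSet B →
      μ B ≤ ν (Metric.thickening ε B) + ENNReal.ofReal ε ∧
      ν B ≤ μ (Metric.thickening ε B) + ENNReal.ofReal ε}

/-- A mixed strategy: a measurable family of Borel probability measures on the action space. -/
def IsMixedStrategy {Y X : Type*} [MeasurableSpace Y] [MeasurableSpace X]
    (g : Y → Measure X) : Prop :=
  (∀ t, IsProbabilityMeasure (g t)) ∧
  ∀ B : Set X, MeasurableSet B → Measurable fun t => g t B

/-- `h : X → Y → ℝ` has increasing differences in `(x, y)`. -/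
def IncreasingDifferences {X Y : Type*} [Preorder X] [Preorder Y] (h : X → Y → ℝ) : Prop :=
  ∀ ⦃x x' : X⦄ ⦃y y' : Y⦄, x < x' → y < y' → h x' y - h x y ≤ h x' y' - h x y'

variable {n : ℕ} {A : Fin n → Type*} {T : Fin n → Type*}

section Defs

variable [∀ i, MeasurableSpace (A i)] [∀ i, MeasurableSpace (T i)]

/-- A completely mixed strategy profile: every nonempty open set of actions gets positive
probability at every type. -/
def CompletelyMixed [∀ i, TopologicalSpace (A i)]
    (g : ∀ i, T i → Measure (A i)) : Prop :=
  ∀ (i : Fin n) (t : T i) (O : Set (A i)), IsOpen O → O.Nonempty → 0 < g i t O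

/-- The interim payoff `V i (a, t; g₋ᵢ)` of player `i` of type `t` playing action `a` against
the mixed strategies `g` of the opponents (the `i`-th component of `g` is irrelevant, since the
`i`-th coordinates of the integrated profiles are overwritten by `a` and `t`);
`cond i t` is a version of the conditional distribution of the type profile given `t_i = t`. -/
def interim (u : ∀ _ : Fin n, (∀ j, A j) → (∀ j, T j) → ℝ)
    (cond : ∀ i, T i → Measure (∀ j, T j))
    (i : Fin n) (a : A i) (t : T i) (g : ∀ j, T j → Measure (A j)) : ℝ :=
  ∫ s, ∫ b, u i (Function.update b i a) (Function.update s i t)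
      ∂(Measure.pi fun j => g j (s j)) ∂(cond i t)

/-- The best responses of player `i` of type `t` against mixed strategies `g` of the others. -/
def BR (u : ∀ _ : Fin n, (∀ j, A j) → (∀ j, T j) → ℝ)
    (cond : ∀ i, T i → Measure (∀ j, T j))
    (i : Fin n) (t : T i) (g : ∀ j, T j → Measure (A j)) : Set (A i) :=
  {a | ∀ a', interim u cond i a' t g ≤ interim u cond i a t g}

/-- A pure strategy profile viewed as a (Dirac) mixed strategy profile. -/
def diracProfile (g : ∀ i, T i → A i) : ∀ i, T i → Measure (A i) :=
  fun i t => Measure.dirac (g i t)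

/-- Bayesian Nash equilibrium: almost every type plays a best response. -/
def IsBNE (u : ∀ _ : Fin n, (∀ j, A j) → (∀ j, T j) → ℝ)
    (cond : ∀ i, T i → Measure (∀ j, T j))
    (prior : Measure (∀ j, T j)) (g : ∀ i, T i → A i) : Prop :=
  ∀ i, ∀ᵐ t ∂(prior.map fun τ => τ i), g i t ∈ BR u cond i t (diracProfile g)

/-- A perfect pure strategy profile: there is a sequence of completely mixed strategy profiles
approximating it in the Prohorov metric, against which the prescribed actions are asymptotically
best responses. -/
def IsPerfect [∀ i, MetricSpace (A i)]
    (u : ∀ _ : Fin n, (∀ j, A j) → (∀ j, T j) → ℝ)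
    (cond : ∀ i, T i → Measure (∀ j, T j))
    (prior : Measure (∀ j, T j)) (g : ∀ i, T i → A i) : Prop :=
  ∃ gk : ℕ → ∀ i, T i → Measure (A i),
    (∀ k i, IsMixedStrategy (gk k i)) ∧
    (∀ k, CompletelyMixed (gk k)) ∧
    ∀ i, ∀ᵐ t ∂(prior.map fun τ => τ i),
      Tendsto (fun k => prohorovDist (gk k i t) (Measure.dirac (g i t))) atTop (nhds 0) ∧
      Tendsto (fun k => infDist (g i t) (BR u cond i t (gk k))) atTop (nhds 0)

end Defs

section Aux

open ProbabilityTheory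

lemma one_mem_prohorovSet {X : Type*} [MeasurableSpace X] [PseudoMetricSpace X]
    (μ ν : Measure X) [IsProbabilityMeasure μ] [IsProbabilityMeasure ν] :
    (1 : ℝ) ∈ {ε : ℝ | ∀ B : Set X, MeasurableSet B →
      μ B ≤ ν (Metric.thickening ε B) + ENNReal.ofReal ε ∧
      ν B ≤ μ (Metric.thickening ε B) + ENNReal.ofReal ε} := by
  intro B _
  constructor <;>
  · refine le_trans prob_le_one ?_
    rw [ENNReal.ofReal_one]
    exact le_add_self

lemma measure_compl_ball_le_of_prohorovDist_lt {X : Type*} [MeasurableSpace X] [MetricSpace X]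
    [OpensMeasurableSpace X] (μ : Measure X) [IsProbabilityMeasure μ] (x : X) {r : ℝ}
    (hr : 0 < r) (h : prohorovDist μ (Measure.dirac x) < r) :
    μ (Metric.ball x r)ᶜ ≤ ENNReal.ofReal r := by
  rw [prohorovDist] at h
  obtain ⟨ε', hε'mem, hε'lt⟩ :=
    exists_lt_of_csInf_lt ⟨1, one_mem_prohorovSet μ (Measure.dirac x)⟩ h
  have h1 : (Measure.dirac x) {x} ≤ μ (Metric.thickening ε' {x}) + ENNReal.ofReal ε' :=
    (hε'mem {x} (measurableSet_singleton x)).2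
  rw [Metric.thickening_singleton, Measure.dirac_apply_of_mem (Set.mem_singleton x)] at h1
  have h2 : (1 : ENNReal) ≤ μ (Metric.ball x r) + ENNReal.ofReal r :=
    h1.trans (add_le_add (measure_mono (Metric.ball_subset_ball hε'lt.le))
      (ENNReal.ofReal_le_ofReal hε'lt.le))
  rw [measure_compl measurableSet_ball (measure_ne_top _ _), measure_univ,
    tsub_le_iff_right]
  rwa [add_comm] at h2

lemma pi_dirac {n : ℕ} {A : Fin n → Type*} [∀ j, MeasurableSpace (A j)] (x : ∀ j, A j) :
    (Measure.pi fun j => Measure.dirac (x j)) = Measure.dirac x := by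
  refine Measure.pi_eq (μ := fun j => Measure.dirac (x j)) fun s hs => ?_
  by_cases hx : ∀ j, x j ∈ s j
  · rw [Measure.dirac_apply_of_mem (Set.mem_univ_pi.mpr hx)]
    exact (Finset.prod_eq_one fun j _ => Measure.dirac_apply_of_mem (hx j)).symm
  · push_neg at hx
    obtain ⟨j, hj⟩ := hx
    rw [Measure.dirac_apply' _ (MeasurableSet.univ_pi hs),
      Set.indicator_of_notMem (fun hmem => hj (Set.mem_univ_pi.mp hmem j))]
    exact (Finset.prod_eq_zero (Finset.mem_univ j) (by
      rw [Measure.dirac_apply' _ (hs j), Set.indicator_of_notMem hj])).symm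

lemma measurable_pi_measure_apply {n : ℕ} {A T : Fin n → Type*}
    [∀ j, MeasurableSpace (A j)] [∀ j, MeasurableSpace (T j)]
    (κ : ∀ j, T j → Measure (A j)) (hprob : ∀ j t, IsProbabilityMeasure (κ j t))
    (hmeas : ∀ j (B : Set (A j)), MeasurableSet B → Measurable fun t => κ j t B) :
    ∀ ⦃B : Set (∀ j, A j)⦄, MeasurableSet B →
      Measurable fun s : ∀ j, T j => Measure.pi (fun j => κ j (s j)) B := by
  refine MeasurableSpace.induction_on_inter generateFrom_pi.symm isPiSystem_pi ?_ ?_ ?_ ?_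
  · simp only [measure_empty]; exact measurable_const
  · rintro B ⟨s', hs', rfl⟩
    have h1 : ∀ s : ∀ j, T j, Measure.pi (fun j => κ j (s j)) (Set.pi Set.univ s') =
        ∏ j, κ j (s j) (s' j) := fun s => by
      haveI := fun j => hprob j (s j)
      exact Measure.pi_pi _ _
    simp_rw [h1]
    exact Finset.measurable_prod _ fun j _ =>
      (hmeas j (s' j) (hs' j (Set.mem_univ j))).comp (measurable_pi_apply j)
  · intro B hB hmB
    have h1 : ∀ s : ∀ j, T j, Measure.pi (fun j => κ j (s j)) Bᶜ =
        1 - Measure.pi (fun j => κ j (s j)) B := fun s => by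
      haveI := fun j => hprob j (s j)
      haveI : IsProbabilityMeasure (Measure.pi fun j => κ j (s j)) := inferInstance
      rw [measure_compl hB (measure_ne_top _ _), measure_univ]
    simp_rw [h1]
    exact measurable_const.sub hmB
  · intro f hdisj hfm hm
    have h1 : ∀ s : ∀ j, T j, Measure.pi (fun j => κ j (s j)) (⋃ m, f m) =
        ∑' m, Measure.pi (fun j => κ j (s j)) (f m) := fun s => measure_iUnion hdisj hfm
    simp_rw [h1]
    exact Measurable.ennreal_tsum hm

lemma stronglyMeasurable_integral_pi {n : ℕ} {A T : Fin n → Type*}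
    [∀ j, MeasurableSpace (A j)] [∀ j, MeasurableSpace (T j)]
    (κ : ∀ j, T j → Measure (A j)) (hprob : ∀ j t, IsProbabilityMeasure (κ j t))
    (hmeas : ∀ j (B : Set (A j)), MeasurableSet B → Measurable fun t => κ j t B)
    (f : (∀ j, T j) → (∀ j, A j) → ℝ) (hf : Measurable (Function.uncurry f)) :
    StronglyMeasurable fun s => ∫ b, f s b ∂(Measure.pi fun j => κ j (s j)) := by
  let K : Kernel (∀ j, T j) (∀ j, A j) :=
    ⟨fun s => Measure.pi fun j => κ j (s j),
     Measure.measurable_of_measurable_coe _ fun B hB =>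
       measurable_pi_measure_apply κ hprob hmeas hB⟩
  haveI : IsMarkovKernel K := ⟨fun s => by
    haveI := fun j => hprob j (s j)
    exact inferInstanceAs (IsProbabilityMeasure (Measure.pi fun j => κ j (s j)))⟩
  exact hf.stronglyMeasurable.integral_kernel_prod_right (κ := K)

lemma tendsto_of_eventually_abs_sub_le {f : ℕ → ℝ} {L : ℝ}
    (h : ∀ ε : ℝ, 0 < ε → ∀ᶠ k in atTop, |f k - L| ≤ ε) : Tendsto f atTop (nhds L) := by
  rw [Metric.tendsto_nhds]
  intro ε hε
  filter_upwards [h (ε/2) (half_pos hε)] with k hk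
  rw [Real.dist_eq]
  exact hk.trans_lt (half_lt_self hε)

end Aux

/-- **Lemma.**  Any pure strategy profile that is perfect is a Bayesian Nash equilibrium. -/
theorem isBNE_of_isPerfect
    {n : ℕ} (hn : 2 ≤ n)
    (A : Fin n → Type*) (T : Fin n → Type*)
    [∀ i, MetricSpace (A i)] [∀ i, CompactSpace (A i)] [∀ i, Lattice (A i)]
    [∀ i, MeasurableSpace (A i)] [∀ i, BorelSpace (A i)]
    [∀ i, MeasurableSpace (T i)] [∀ i, PartialOrder (T i)]
    -- the common prior, with atomless marginals
    (prior : Measure (∀ j, T j)) [IsProbabilityMeasure prior]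
    (hatomless : ∀ i, NoAtoms (prior.map fun τ => τ i))
    -- payoffs: bounded, jointly measurable, continuous in actions
    (u : ∀ _ : Fin n, (∀ j, A j) → (∀ j, T j) → ℝ)
    (hubdd : ∃ M : ℝ, ∀ i a t, |u i a t| ≤ M)
    (humeas : ∀ i, Measurable fun p : (∀ j, A j) × (∀ j, T j) => u i p.1 p.2)
    (hucont : ∀ i t, Continuous fun a => u i a t)
    -- a version of the conditional distribution of the type profile given one's own type
    (cond : ∀ i, T i → Measure (∀ j, T j))
    (hcondprob : ∀ i t, IsProbabilityMeasure (cond i t))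
    (hcondmeas : ∀ i (e : Set (∀ j, T j)), MeasurableSet e → Measurable fun t => cond i t e)
    (hconddis : ∀ i (e : Set (∀ j, T j)), MeasurableSet e →
      ∫⁻ τ, cond i (τ i) e ∂prior = prior e)
    -- a pure strategy profile
    (g : ∀ i, T i → A i) (hgmeas : ∀ i, Measurable (g i))
    -- which is perfect
    (hperfect : IsPerfect u cond prior g) :
    IsBNE u cond prior g := by
  classical
  obtain ⟨M, hM⟩ := hubdd
  -- nonemptiness of the type and action spaces
  have hTne : Nonempty (∀ j, T j) := by
    by_contra h
    rw [not_nonempty_iff] at h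
    have h1 := measure_univ (μ := prior)
    rw [Set.univ_eq_empty_iff.mpr h] at h1
    simp at h1
  obtain ⟨τ0⟩ := hTne
  have hn0 : 0 < n := by omega
  have hM0 : 0 ≤ M := le_trans (abs_nonneg _) (hM ⟨0, hn0⟩ (fun j => g j (τ0 j)) τ0)
  haveI hAne : ∀ j, Nonempty (A j) := fun j => ⟨g j (τ0 j)⟩
  obtain ⟨gk, hmix, -, hae⟩ := hperfect
  haveI hgkprob : ∀ k j (t' : T j), IsProbabilityMeasure (gk k j t') :=
    fun k j t' => (hmix k j).1 t'
  intro i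
  -- good sets of types
  let P : ∀ j, T j → Prop := fun j t' =>
    Tendsto (fun k => prohorovDist (gk k j t') (Measure.dirac (g j t'))) atTop (nhds 0) ∧
    Tendsto (fun k => infDist (g j t') (BR u cond j t' (gk k))) atTop (nhds 0)
  have hPae : ∀ j, ∀ᵐ t' ∂(prior.map fun τ => τ j), P j t' := hae
  let N : ∀ j, Set (T j) := fun j => toMeasurable (prior.map fun τ => τ j) {t' | ¬ P j t'}
  have hNmeas : ∀ j, MeasurableSet (N j) := fun j => measurableSet_toMeasurable _ _
  have hNnull : ∀ j, (prior.map fun τ => τ j) (N j) = 0 := fun j => by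
    rw [show N j = toMeasurable (prior.map fun τ => τ j) {t' | ¬ P j t'} from rfl,
      measure_toMeasurable]
    exact ae_iff.mp (hPae j)
  have hNsub : ∀ j t', t' ∉ N j → P j t' := fun j t' ht' => by
    by_contra hc; exact ht' (subset_toMeasurable _ _ hc)
  have hemeas : ∀ j, MeasurableSet ((fun τ : ∀ j', T j' => τ j) ⁻¹' N j) :=
    fun j => (hNmeas j).preimage (measurable_pi_apply j)
  have hprior0 : ∀ j, prior ((fun τ : ∀ j', T j' => τ j) ⁻¹' N j) = 0 := fun j => by
    rw [← Measure.map_apply (measurable_pi_apply j) (hNmeas j)]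
    exact hNnull j
  have hcond0 : ∀ j, ∀ᵐ t' ∂(prior.map fun τ => τ i),
      cond i t' ((fun τ : ∀ j', T j' => τ j) ⁻¹' N j) = 0 := by
    intro j
    have hmf : Measurable fun t' => cond i t' ((fun τ : ∀ j', T j' => τ j) ⁻¹' N j) :=
      hcondmeas i _ (hemeas j)
    have h0 : ∫⁻ τ, cond i (τ i) ((fun τ' : ∀ j', T j' => τ' j) ⁻¹' N j) ∂prior = 0 := by
      rw [hconddis i _ (hemeas j)]
      exact hprior0 j
    have h1 : ∀ᵐ τ ∂prior,
        cond i (τ i) ((fun τ' : ∀ j', T j' => τ' j) ⁻¹' N j) = 0 := by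
      have h2 := (lintegral_eq_zero_iff (hmf.comp (measurable_pi_apply i))).mp h0
      filter_upwards [h2] with τ hτ using hτ
    refine (ae_map_iff (measurable_pi_apply i).aemeasurable ?_).mpr h1
    exact hmf (measurableSet_singleton 0)
  filter_upwards [hPae i, ae_all_iff.mpr hcond0] with t hti hct
  -- now t is a fixed good type of player i
  haveI : IsProbabilityMeasure (cond i t) := hcondprob i t
  have hgood : ∀ᵐ s ∂(cond i t), ∀ j, P j (s j) := by
    refine ae_all_iff.mpr fun j => ?_
    have h1 : ∀ᵐ s ∂(cond i t), s ∉ ((fun τ : ∀ j', T j' => τ j) ⁻¹' N j) :=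
      measure_eq_zero_iff_ae_notMem.mp (hct j)
    exact h1.mono fun s hs => hNsub j (s j) hs
  -- notation
  let φ : A i → (∀ j, T j) → (∀ j, A j) → ℝ := fun a s b =>
    u i (Function.update b i a) (Function.update s i t)
  let πk : ℕ → (∀ j, T j) → Measure (∀ j, A j) := fun k s => Measure.pi fun j => gk k j (s j)
  let Ik : ℕ → A i → (∀ j, T j) → ℝ := fun k a s => ∫ b, φ a s b ∂(πk k s)
  let xs : (∀ j, T j) → ∀ j, A j := fun s j => g j (s j)
  let IL : A i → (∀ j, T j) → ℝ := fun a s => φ a s (xs s)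
  haveI hπprob : ∀ k s, IsProbabilityMeasure (πk k s) := fun k s =>
    inferInstanceAs (IsProbabilityMeasure (Measure.pi fun j => gk k j (s j)))
  -- interim payoffs as integrals
  have hFk : ∀ k a, interim u cond i a t (gk k) = ∫ s, Ik k a s ∂(cond i t) := fun k a => rfl
  have hFd : ∀ a, interim u cond i a t (diracProfile g) = ∫ s, IL a s ∂(cond i t) := by
    intro a
    show (∫ s, ∫ b, u i (Function.update b i a) (Function.update s i t)
        ∂(Measure.pi fun j => diracProfile g j (s j)) ∂(cond i t)) = _
    refine integral_congr_ae (Filter.Eventually.of_forall fun s => ?_)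
    have h1 : (Measure.pi fun j => diracProfile g j (s j)) = Measure.dirac (xs s) :=
      pi_dirac (xs s)
    show (∫ b, u i (Function.update b i a) (Function.update s i t)
        ∂(Measure.pi fun j => diracProfile g j (s j))) = IL a s
    rw [h1, integral_dirac]
  -- basic bounds
  have hφb : ∀ a s b, |φ a s b| ≤ M := fun a s b => hM i _ _
  have hIkb : ∀ k a s, |Ik k a s| ≤ M := by
    intro k a s
    rw [← Real.norm_eq_abs]
    calc ‖∫ b, φ a s b ∂(πk k s)‖ ≤ M * ((πk k s) Set.univ).toReal :=
          norm_integral_le_of_norm_le_const (Filter.Eventually.of_forall fun b => by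
            rw [Real.norm_eq_abs]; exact hφb a s b)
      _ = M := by simp
  -- measurability
  have hIkSM : ∀ k a, StronglyMeasurable fun s => Ik k a s := by
    intro k a
    refine stronglyMeasurable_integral_pi (fun j => gk k j) (fun j t' => (hmix k j).1 t')
      (fun j B hB => (hmix k j).2 B hB) (fun s b => φ a s b) ?_
    exact (humeas i).comp ((measurable_update_left.comp measurable_snd).prodMk
      (measurable_update_left.comp measurable_fst))
  have hxs : Measurable xs :=
    measurable_pi_lambda _ fun j => (hgmeas j).comp (measurable_pi_apply j)
  have hILSM : ∀ a, StronglyMeasurable fun s => IL a s := by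
    intro a
    apply Measurable.stronglyMeasurable
    exact (humeas i).comp ((measurable_update_left.comp hxs).prodMk measurable_update_left)
  -- continuity
  have hφcont : ∀ s, Continuous fun p : A i × (∀ j, A j) => φ p.1 s p.2 := fun s =>
    (hucont i (Function.update s i t)).comp (continuous_snd.update i continuous_fst)
  have hIkcont : ∀ k s, Continuous fun a => Ik k a s := by
    intro k s
    rw [continuous_iff_continuousAt]
    intro a0
    refine continuousAt_of_dominated (bound := fun _ => M) ?_ ?_ (integrable_const M) ?_
    · exact Filter.Eventually.of_forall fun a =>
        ((hφcont s).comp (Continuous.prodMk_right a)).aestronglyMeasurable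
    · exact Filter.Eventually.of_forall fun a => Filter.Eventually.of_forall fun b => by
        rw [Real.norm_eq_abs]; exact hφb a s b
    · exact Filter.Eventually.of_forall fun b =>
        ((hφcont s).comp (continuous_id.prodMk continuous_const)).continuousAt
  have hFkcont : ∀ k, Continuous fun a => ∫ s, Ik k a s ∂(cond i t) := by
    intro k
    rw [continuous_iff_continuousAt]
    intro a0
    refine continuousAt_of_dominated (bound := fun _ => M) ?_ ?_ (integrable_const M) ?_
    · exact Filter.Eventually.of_forall fun a => (hIkSM k a).aestronglyMeasurable
    · exact Filter.Eventually.of_forall fun a => Filter.Eventually.of_forall fun s => by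
        rw [Real.norm_eq_abs]; exact hIkb k a s
    · exact Filter.Eventually.of_forall fun s => (hIkcont k s).continuousAt
  have hFLcont : Continuous fun a => ∫ s, IL a s ∂(cond i t) := by
    rw [continuous_iff_continuousAt]
    intro a0
    refine continuousAt_of_dominated (bound := fun _ => M) ?_ ?_ (integrable_const M) ?_
    · exact Filter.Eventually.of_forall fun a => (hILSM a).aestronglyMeasurable
    · exact Filter.Eventually.of_forall fun a => Filter.Eventually.of_forall fun s => by
        rw [Real.norm_eq_abs]; exact hφb a s (xs s)
    · exact Filter.Eventually.of_forall fun s =>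
        ((hφcont s).comp (continuous_id.prodMk continuous_const)).continuousAt
  -- coordinate marginals of the product measure
  have hcoord : ∀ k (s : ∀ j, T j) (j : Fin n) (B : Set (A j)), MeasurableSet B →
      (πk k s) ((fun b : ∀ j', A j' => b j) ⁻¹' B) = gk k j (s j) B := by
    intro k s j B hB
    have h1 : ((fun b : ∀ j', A j' => b j) ⁻¹' B) =
        Set.pi Set.univ (Function.update (fun j' => (Set.univ : Set (A j'))) j B) :=
      Set.eval_preimage
    rw [show (πk k s) = Measure.pi (fun j' => gk k j' (s j')) from rfl, h1, Measure.pi_pi,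
      Fintype.prod_eq_single j (fun j' hne => by
        rw [Function.update_of_ne hne]; exact measure_univ),
      Function.update_self]
  -- key uniform convergence of inner integrals at good type profiles
  have hn' : (0 : ℝ) < n := by exact_mod_cast hn0
  have hkey : ∀ s : ∀ j, T j, (∀ j, P j (s j)) → ∀ ε : ℝ, 0 < ε →
      ∀ᶠ k in atTop, ∀ a, |Ik k a s - IL a s| ≤ ε := by
    intro s hsP ε hε
    have hΦuc : UniformContinuous fun p : A i × (∀ j, A j) => φ p.1 s p.2 :=
      CompactSpace.uniformContinuous_of_continuous (hφcont s)
    obtain ⟨δ, hδ0, hδ⟩ := Metric.uniformContinuous_iff.mp hΦuc (ε/2) (half_pos hε)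
    have hden : (0:ℝ) < 2 * n * (2*M+1) := by nlinarith
    set r : ℝ := min (δ/2) (ε/(2 * n * (2*M+1))) with hrdef
    have hr0 : 0 < r := lt_min (half_pos hδ0) (div_pos hε hden)
    have hrδ : r < δ := lt_of_le_of_lt (min_le_left _ _) (half_lt_self hδ0)
    have hrε : r * (2 * n * (2*M+1)) ≤ ε := by
      rw [← le_div_iff₀ hden]
      exact min_le_right _ _
    have hev : ∀ᶠ k in atTop, ∀ j,
        prohorovDist (gk k j (s j)) (Measure.dirac (g j (s j))) < r :=
      eventually_all.mpr fun j => (hsP j).1.eventually_lt_const hr0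
    filter_upwards [hev] with k hk a
    have hmass : ∀ j, gk k j (s j) (Metric.ball (g j (s j)) r)ᶜ ≤ ENNReal.ofReal r :=
      fun j => measure_compl_ball_le_of_prohorovDist_lt _ _ hr0 (hk j)
    set E : Set (∀ j, A j) := Set.pi Set.univ (fun j => Metric.ball (g j (s j)) r) with hEdef
    have hEmeas : MeasurableSet E := MeasurableSet.univ_pi fun j => measurableSet_ball
    have hEc : (πk k s) Eᶜ ≤ ENNReal.ofReal (n * r) := by
      have hsub : Eᶜ ⊆ ⋃ j, (fun b : ∀ j', A j' => b j) ⁻¹' (Metric.ball (g j (s j)) r)ᶜ := by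
        intro b hb
        rw [hEdef, Set.mem_compl_iff, Set.mem_univ_pi] at hb
        push_neg at hb
        obtain ⟨j, hj⟩ := hb
        exact Set.mem_iUnion.mpr ⟨j, hj⟩
      calc (πk k s) Eᶜ
          ≤ ∑ j, (πk k s) ((fun b : ∀ j', A j' => b j) ⁻¹' (Metric.ball (g j (s j)) r)ᶜ) :=
            (measure_mono hsub).trans (measure_iUnion_fintype_le _ _)
        _ = ∑ j, gk k j (s j) (Metric.ball (g j (s j)) r)ᶜ :=
            Finset.sum_congr rfl fun j _ => hcoord k s j _ measurableSet_ball.compl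
        _ ≤ ∑ _j : Fin n, ENNReal.ofReal r := Finset.sum_le_sum fun j _ => hmass j
        _ = (n : ENNReal) * ENNReal.ofReal r := by
            simp [Finset.sum_const, nsmul_eq_mul]
        _ = ENNReal.ofReal (n * r) := by
            rw [ENNReal.ofReal_mul (by positivity)]
            norm_num [ENNReal.ofReal_natCast]
    have hint1 : Integrable (fun b => φ a s b) (πk k s) :=
      (integrable_const M).mono' (((hφcont s).comp (Continuous.prodMk_right a)).aestronglyMeasurable)
        (Filter.Eventually.of_forall fun b => by rw [Real.norm_eq_abs]; exact hφb a s b)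
    have hdiff : Ik k a s - IL a s = ∫ b, (φ a s b - φ a s (xs s)) ∂(πk k s) := by
      rw [integral_sub hint1 (integrable_const _), integral_const, probReal_univ]
      simp only [one_smul]; rfl
    have htoReal : ((πk k s) Eᶜ).toReal ≤ n * r :=
      ENNReal.toReal_le_of_le_ofReal (by positivity) hEc
    have hptwise : ∀ b, ‖φ a s b - φ a s (xs s)‖ ≤
        ε/2 + Set.indicator Eᶜ (fun _ => 2*M) b := by
      intro b
      by_cases hbE : b ∈ E
      · rw [Set.indicator_of_notMem (by simpa using hbE), add_zero, Real.norm_eq_abs]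
        have hbx : dist b (xs s) < r := by
          rw [dist_pi_lt_iff hr0]
          intro j
          exact Set.mem_univ_pi.mp hbE j
        have hd : dist ((a, b) : A i × (∀ j, A j)) (a, xs s) < δ := by
          rw [Prod.dist_eq]
          simp only [dist_self]
          exact max_lt hδ0 (hbx.trans hrδ)
        have := hδ hd
        rw [Real.dist_eq] at this
        exact this.le
      · rw [Set.indicator_of_mem (by simpa using hbE)]
        calc ‖φ a s b - φ a s (xs s)‖ ≤ ‖φ a s b‖ + ‖φ a s (xs s)‖ := norm_sub_le _ _
          _ ≤ M + M := by
              rw [Real.norm_eq_abs, Real.norm_eq_abs]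
              exact add_le_add (hφb a s b) (hφb a s (xs s))
          _ ≤ ε/2 + 2*M := by linarith
    calc |Ik k a s - IL a s| = ‖∫ b, (φ a s b - φ a s (xs s)) ∂(πk k s)‖ := by
          rw [hdiff, Real.norm_eq_abs]
      _ ≤ ∫ b, ‖φ a s b - φ a s (xs s)‖ ∂(πk k s) := norm_integral_le_integral_norm _
      _ ≤ ∫ b, (ε/2 + Set.indicator Eᶜ (fun _ => 2*M) b) ∂(πk k s) := by
          refine integral_mono (hint1.sub (integrable_const _)).norm
            ((integrable_const (ε/2)).add
              ((integrable_const (2*M)).indicator hEmeas.compl)) hptwise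
      _ = ε/2 + ((πk k s) Eᶜ).toReal * (2*M) := by
          rw [integral_add (integrable_const _)
            ((integrable_const (2*M)).indicator hEmeas.compl), integral_const,
            integral_indicator_const _ hEmeas.compl, probReal_univ]
          simp [smul_eq_mul, Measure.real]
      _ ≤ ε := by nlinarith [mul_nonneg (mul_nonneg hn'.le hr0.le) hM0]
  -- convergence of interim payoffs at fixed action
  have hC1 : ∀ a, Tendsto (fun k => ∫ s, Ik k a s ∂(cond i t)) atTop
      (nhds (∫ s, IL a s ∂(cond i t))) := by
    intro a
    refine tendsto_integral_of_dominated_convergence (fun _ => M)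
      (fun k => (hIkSM k a).aestronglyMeasurable) (integrable_const M)
      (fun k => Filter.Eventually.of_forall fun s => by
        rw [Real.norm_eq_abs]; exact hIkb k a s) ?_
    filter_upwards [hgood] with s hsP
    apply tendsto_of_eventually_abs_sub_le
    intro ε hε
    exact (hkey s hsP ε hε).mono fun k hk => hk a
  -- nonemptiness of best responses and choice of near-best responses
  haveI : Nonempty (A i) := hAne i
  have hBRne : ∀ k, (BR u cond i t (gk k)).Nonempty := by
    intro k
    obtain ⟨a0, -, ha0⟩ := isCompact_univ.exists_isMaxOn Set.univ_nonempty
      ((hFkcont k).continuousOn)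
    exact ⟨a0, fun a' => isMaxOn_iff.mp ha0 a' (Set.mem_univ a')⟩
  have hbex : ∀ k, ∃ b', b' ∈ BR u cond i t (gk k) ∧
      dist (g i t) b' < infDist (g i t) (BR u cond i t (gk k)) + (1:ℝ)/(k+1) := by
    intro k
    obtain ⟨b', hb1, hb2⟩ := (Metric.infDist_lt_iff (hBRne k)).mp
      (lt_add_of_pos_right _ (by positivity : (0:ℝ) < 1/(k+1)))
    exact ⟨b', hb1, hb2⟩
  choose b hbBR hbd using hbex
  have hbtend : Tendsto b atTop (nhds (g i t)) := by
    rw [tendsto_iff_dist_tendsto_zero]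
    refine squeeze_zero (g := fun k => infDist (g i t) (BR u cond i t (gk k)) + (1:ℝ)/(k+1))
      (fun k => dist_nonneg) (fun k => ?_) ?_
    · rw [dist_comm]
      exact (hbd k).le
    · simpa using hti.2.add tendsto_one_div_add_atTop_nhds_zero_nat
  -- integrability
  have hIkInt : ∀ k a, Integrable (fun s => Ik k a s) (cond i t) :=
    fun k a => (integrable_const M).mono' (hIkSM k a).aestronglyMeasurable
      (Filter.Eventually.of_forall fun s => by rw [Real.norm_eq_abs]; exact hIkb k a s)
  have hILInt : ∀ a, Integrable (fun s => IL a s) (cond i t) :=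
    fun a => (integrable_const M).mono' (hILSM a).aestronglyMeasurable
      (Filter.Eventually.of_forall fun s => by rw [Real.norm_eq_abs]; exact hφb a s (xs s))
  -- convergence along the near-best responses
  have hC2a : Tendsto (fun k => ∫ s, (Ik k (b k) s - IL (b k) s) ∂(cond i t)) atTop
      (nhds 0) := by
    have h0 : (0:ℝ) = ∫ (_ : ∀ j, T j), (0:ℝ) ∂(cond i t) := by simp
    rw [h0]
    refine tendsto_integral_of_dominated_convergence (fun _ => M + M)
      (fun k => ((hIkSM k (b k)).sub (hILSM (b k))).aestronglyMeasurable)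
      (integrable_const _)
      (fun k => Filter.Eventually.of_forall fun s => ?_) ?_
    · rw [Real.norm_eq_abs]
      calc |Ik k (b k) s - IL (b k) s| ≤ |Ik k (b k) s| + |IL (b k) s| := abs_sub _ _
        _ ≤ M + M := add_le_add (hIkb _ _ _) (hφb _ _ _)
    · filter_upwards [hgood] with s hsP
      have : Tendsto (fun k => Ik k (b k) s - IL (b k) s) atTop (nhds 0) := by
        apply tendsto_of_eventually_abs_sub_le
        intro ε hε
        exact (hkey s hsP ε hε).mono fun k hk => by simpa using hk (b k)
      exact this
  have hC2 : Tendsto (fun k => ∫ s, Ik k (b k) s ∂(cond i t)) atTop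
      (nhds (∫ s, IL (g i t) s ∂(cond i t))) := by
    have hsplit : (fun k => ∫ s, Ik k (b k) s ∂(cond i t)) =
        fun k => (∫ s, (Ik k (b k) s - IL (b k) s) ∂(cond i t)) +
          ∫ s, IL (b k) s ∂(cond i t) := by
      funext k
      rw [integral_sub (hIkInt k (b k)) (hILInt (b k))]
      ring
    rw [hsplit]
    have hcont2 : Tendsto (fun k => ∫ s, IL (b k) s ∂(cond i t)) atTop
        (nhds (∫ s, IL (g i t) s ∂(cond i t))) :=
      (hFLcont.tendsto (g i t)).comp hbtend
    simpa using hC2a.add hcont2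
  -- conclusion
  show ∀ a', interim u cond i a' t (diracProfile g) ≤
    interim u cond i (g i t) t (diracProfile g)
  intro a'
  have hle : ∀ k, ∫ s, Ik k a' s ∂(cond i t) ≤ ∫ s, Ik k (b k) s ∂(cond i t) := fun k =>
    (hbBR k : ∀ a'', interim u cond i a'' t (gk k) ≤ interim u cond i (b k) t (gk k)) a'
  have hfin : ∫ s, IL a' s ∂(cond i t) ≤ ∫ s, IL (g i t) s ∂(cond i t) :=
    le_of_tendsto_of_tendsto' (hC1 a') hC2 hle
  rw [hFd a', hFd (g i t)]
  exact hfin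

end

end MonotonePerfection
end

section
/- If every player's action space A_i is finite, then any perfect monotone equilibrium of a Bayesian game is admissible; that is, for each player i, the equilibrium action g_i(t_i) is undominated at t_i for λ_i-almost all types t_i. -/
/-!
Statement 6 (Lemma `lem-admissibility` (2), finite case): If every action space is finite,
then any perfect monotone equilibrium is admissible: almost every equilibrium action is
undominated.
-/

open MeasureTheory Filter Metric

namespace MonotonePerfection

noncomputable section

variable {n : ℕ} {A : Fin n → Type*} {T : Fin n → Type*}

/-- An action `a` of player `i` is weakly dominated at type `t` if some Borel probability
measure over own actions does at least as well against every mixed strategy profile of the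
opponents, and strictly better against some profile. -/
def WeaklyDominated {n : ℕ} {A : Fin n → Type*} {T : Fin n → Type*}
    [∀ i, MeasurableSpace (A i)] [∀ i, MeasurableSpace (T i)]
    (u : ∀ _ : Fin n, (∀ j, A j) → (∀ j, T j) → ℝ)
    (cond : ∀ i, T i → Measure (∀ j, T j))
    (i : Fin n) (a : A i) (t : T i) : Prop :=
  ∃ σ : Measure (A i), IsProbabilityMeasure σ ∧
    (∀ g : ∀ j, T j → Measure (A j), (∀ j, IsMixedStrategy (g j)) →
      interim u cond i a t g ≤ ∫ a', interim u cond i a' t g ∂σ) ∧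
    (∃ g : ∀ j, T j → Measure (A j), (∀ j, IsMixedStrategy (g j)) ∧
      interim u cond i a t g < ∫ a', interim u cond i a' t g ∂σ)

lemma sum_toReal_singleton {α : Type*} [Fintype α] [MeasurableSpace α]
    [MeasurableSingletonClass α] (μ : Measure α) [IsProbabilityMeasure μ] :
    ∑ β : α, (μ {β}).toReal = 1 := by
  classical
  have h : ∑ β : α, μ {β} = μ Set.univ := by
    rw [← MeasureTheory.measure_biUnion_finset (s := Finset.univ) (f := fun β => ({β} : Set α))
      (fun x _ y _ hxy => by simpa [Function.onFun] using hxy)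
      (fun b _ => measurableSet_singleton b)]
    congr 1
    ext x; simp
  rw [← ENNReal.toReal_sum (fun a _ => measure_ne_top μ _), h, measure_univ, ENNReal.toReal_one]

section PC

variable {Tt S α : Type*} [MeasurableSpace Tt] [MeasurableSpace S] [MeasurableSpace α]
  [MeasurableSingletonClass α] [Fintype α] [Nonempty α]

lemma pc_lemma (ν : Measure Tt) [IsProbabilityMeasure ν]
    (π : Tt → S) (hπ : Measurable π)
    (r : α → Tt → ℝ) (hr : ∀ β, Integrable (r β) ν)
    (F : (S → Measure α) → ℝ)
    (hF : ∀ w, IsMixedStrategy w →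
      F w = ∫ t, ∑ β, (w (π t) {β}).toReal * r β t ∂ν)
    (hF0 : ∀ w, IsMixedStrategy w → 0 ≤ F w)
    (q : S → Measure α) (hq : IsMixedStrategy q)
    (hqpos : ∀ s (β : α), 0 < q s {β})
    (hFq : F q = 0) :
    ∀ w, IsMixedStrategy w → F w = 0 := by
  classical
  set m : MeasurableSpace Tt := MeasurableSpace.comap π inferInstance with hmdef
  have hm : m ≤ _ := hπ.comap_le
  set ρ : α → Tt → ℝ := fun β => ν[r β | m] with hρdef
  have hρsm : ∀ β, StronglyMeasurable[m] (ρ β) := fun β => stronglyMeasurable_condExp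
  have hρint : ∀ β, Integrable (ρ β) ν := fun β => integrable_condExp
  have hπm : Measurable[m] π := Measurable.of_comap_le le_rfl
  -- weights are [0,1]-valued and m-measurable
  have hwm : ∀ (w : S → Measure α), IsMixedStrategy w → ∀ β : α,
      Measurable[m] fun t => (w (π t) {β}).toReal := fun w hw β =>
    ((hw.2 {β} (measurableSet_singleton β)).comp hπm).ennreal_toReal
  have hwb : ∀ (w : S → Measure α), IsMixedStrategy w → ∀ (s : S) (β : α),
      ‖(w s {β}).toReal‖ ≤ 1 := by
    intro w hw s β
    haveI := hw.1 s
    rw [Real.norm_eq_abs, abs_of_nonneg ENNReal.toReal_nonneg]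
    simpa using ENNReal.toReal_mono ENNReal.one_ne_top prob_le_one
  have hwint : ∀ (w : S → Measure α), IsMixedStrategy w → ∀ (φ : Tt → ℝ), Integrable φ ν →
      ∀ β : α, Integrable (fun t => (w (π t) {β}).toReal * φ t) ν := by
    intro w hw φ hφ β
    have ham :=
      (((hwm w hw β).mono hm le_rfl).aestronglyMeasurable (μ := ν))
    exact hφ.bdd_mul ham (Filter.Eventually.of_forall fun t => hwb w hw (π t) β)
  -- Key step: can replace r by its conditional expectation ρ
  have K1 : ∀ w, IsMixedStrategy w →
      F w = ∫ t, ∑ β, (w (π t) {β}).toReal * ρ β t ∂ν := by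
    intro w hw
    rw [hF w hw, integral_finset_sum _ (fun β _ => hwint w hw (r β) (hr β) β),
      integral_finset_sum _ (fun β _ => hwint w hw (ρ β) (hρint β) β)]
    refine Finset.sum_congr rfl fun β _ => ?_
    have hmul := condExp_stronglyMeasurable_mul_of_bound (μ := ν) hm
      ((hwm w hw β).stronglyMeasurable) (hr β) 1
      (Filter.Eventually.of_forall fun t => hwb w hw (π t) β)
    calc ∫ t, (w (π t) {β}).toReal * r β t ∂ν
        = ∫ t, (ν[(fun t => (w (π t) {β}).toReal) * r β | m]) t ∂ν :=
          (integral_condExp hm).symm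
      _ = ∫ t, (w (π t) {β}).toReal * ρ β t ∂ν := by
          refine integral_congr_ae (hmul.mono fun t ht => ?_)
          simpa using ht
  -- pointwise minimum of the conditional expectations
  set mn : Tt → ℝ := fun t => Finset.univ.inf' Finset.univ_nonempty (fun β => ρ β t) with hmndef
  have hmn_le : ∀ (t : Tt) (β : α), mn t ≤ ρ β t := fun t β =>
    Finset.inf'_le _ (Finset.mem_univ β)
  have hinf : ∀ (s : Finset α) (hs : s.Nonempty),
      Measurable[m] (fun t => s.inf' hs fun β => ρ β t) := by
    intro s hs
    induction hs using Finset.Nonempty.cons_induction with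
    | singleton a => exact (hρsm a).measurable
    | cons a s ha hs ih =>
        have h : (fun t => (Finset.cons a s ha).inf' (Finset.cons_nonempty ha)
            (fun β => ρ β t)) = fun t => (ρ a t) ⊓ (s.inf' hs fun β => ρ β t) :=
          funext fun t => Finset.inf'_cons (H := hs) (fun β => ρ β t)
        rw [h]
        exact Measurable.min (hρsm a).measurable ih
  have hmnm : Measurable[m] mn := hinf Finset.univ Finset.univ_nonempty
  have hmnint : Integrable mn ν := by
    refine Integrable.mono' (integrable_finset_sum Finset.univ fun β _ => (hρint β).abs)
      ((hmnm.mono hm le_rfl).aestronglyMeasurable) (Filter.Eventually.of_forall fun t => ?_)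
    obtain ⟨β, -, hβ⟩ := Finset.exists_mem_eq_inf' (Finset.univ_nonempty) (fun β => ρ β t)
    have hβ' : mn t = ρ β t := hβ
    rw [Real.norm_eq_abs, hβ']
    exact Finset.single_le_sum (f := fun i => |ρ i t|) (fun i _ => abs_nonneg (ρ i t))
      (Finset.mem_univ β)
  -- a measurable selector of the argmin, factoring through π
  set e : Fin (Fintype.card α) ≃ α := (Fintype.equivFin α).symm with hedef
  set P : Fin (Fintype.card α) → Set Tt := fun l =>
    {t | ρ (e l) t = mn t} ∩
      ⋂ (l' : Fin (Fintype.card α)) (_ : l' < l), {t | ρ (e l') t = mn t}ᶜ with hPdef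
  have hPmeas : ∀ l, MeasurableSet[m] (P l) := by
    intro l
    refine (measurableSet_eq_fun (hρsm (e l)).measurable hmnm).inter ?_
    exact MeasurableSet.iInter fun l' => MeasurableSet.iInter fun _ =>
      (measurableSet_eq_fun (hρsm (e l')).measurable hmnm).compl
  have hmemP : ∀ (t : Tt) l, t ∈ P l ↔
      (ρ (e l) t = mn t ∧ ∀ l', l' < l → ¬ ρ (e l') t = mn t) := by
    intro t l
    simp only [hPdef, Set.mem_inter_iff, Set.mem_setOf_eq, Set.mem_iInter, Set.mem_compl_iff]
  have hlsel : ∀ t : Tt, ∃ l, t ∈ P l ∧ ∀ l', t ∈ P l' → l' = l := by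
    intro t
    have hne : (Finset.univ.filter fun l => ρ (e l) t = mn t).Nonempty := by
      obtain ⟨β, -, hβ⟩ := Finset.exists_mem_eq_inf' (Finset.univ_nonempty) (fun β => ρ β t)
      exact ⟨e.symm β, Finset.mem_filter.2 ⟨Finset.mem_univ _, by
        rw [e.apply_symm_apply]; exact hβ.symm⟩⟩
    set l₀ := (Finset.univ.filter fun l => ρ (e l) t = mn t).min' hne with hl₀def
    have hl₀mem := Finset.min'_mem _ hne
    have hl₀eq : ρ (e l₀) t = mn t := (Finset.mem_filter.1 hl₀mem).2
    refine ⟨l₀, (hmemP t l₀).2 ⟨hl₀eq, fun l' hl' hcon => ?_⟩, fun l' hl'P => ?_⟩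
    · exact absurd (Finset.min'_le _ l' (Finset.mem_filter.2 ⟨Finset.mem_univ _, hcon⟩))
        (not_le.2 hl')
    · obtain ⟨h1, h2⟩ := (hmemP t l').1 hl'P
      have hle : l₀ ≤ l' := Finset.min'_le _ l' (Finset.mem_filter.2 ⟨Finset.mem_univ _, h1⟩)
      rcases eq_or_lt_of_le hle with h | h
      · exact h.symm
      · exact absurd hl₀eq (h2 l₀ h)
  have hPms : ∀ l, ∃ Es : Set S, MeasurableSet Es ∧ π ⁻¹' Es = P l := fun l => hPmeas l
  choose E hEm hEp using hPms
  let ψ : (Fin (Fintype.card α) → Bool) → α := fun v =>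
    if h : (Finset.univ.filter fun l => v l = true).Nonempty then
      e ((Finset.univ.filter fun l => v l = true).min' h) else Classical.arbitrary α
  let χ : S → (Fin (Fintype.card α) → Bool) := fun s l => decide (s ∈ E l)
  let bsel : S → α := fun s => ψ (χ s)
  have hχm : Measurable χ := by
    refine measurable_pi_lambda _ fun l => ?_
    refine measurable_to_countable' fun y => ?_
    cases y with
    | false =>
        have h : (fun s => decide (s ∈ E l)) ⁻¹' {false} = (E l)ᶜ := by ext s; simp
        rw [h]; exact (hEm l).compl
    | true =>
        have h : (fun s => decide (s ∈ E l)) ⁻¹' {true} = E l := by ext s; simp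
        rw [h]; exact hEm l
  have hbselm : Measurable bsel := (measurable_of_countable ψ).comp hχm
  have hkey : ∀ t : Tt, ρ (bsel (π t)) t = mn t := by
    intro t
    obtain ⟨l₀, hl₀, huniq⟩ := hlsel t
    have hmemE : ∀ l, (π t ∈ E l) ↔ t ∈ P l := fun l => by rw [← hEp l]; rfl
    have hfil : (Finset.univ.filter fun l => χ (π t) l = true) = {l₀} := by
      ext l
      simp only [Finset.mem_filter, Finset.mem_univ, true_and, Finset.mem_singleton, χ,
        decide_eq_true_eq, hmemE]
      exact ⟨fun h => huniq l h, fun h => h ▸ hl₀⟩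
    have hψ : ψ (χ (π t)) = e l₀ := by
      simp only [ψ, hfil]
      rw [dif_pos (Finset.singleton_nonempty l₀)]
      exact congrArg e (Finset.min'_singleton l₀)
    show ρ (ψ (χ (π t))) t = mn t
    rw [hψ]
    exact ((hmemP t l₀).1 hl₀).1
  let wstar : S → Measure α := fun s => Measure.dirac (bsel s)
  have hwstar : IsMixedStrategy wstar := by
    constructor
    · intro s; exact Measure.dirac.isProbabilityMeasure
    · intro B hB
      have h : (fun s => wstar s B) = fun s => B.indicator (1 : α → ENNReal) (bsel s) := by
        funext s; exact Measure.dirac_apply' _ hB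
      rw [h]
      exact (measurable_one.indicator hB).comp hbselm
  have hFstar : F wstar = ∫ t, mn t ∂ν := by
    rw [K1 wstar hwstar]
    refine integral_congr_ae (Filter.Eventually.of_forall fun t => ?_)
    have hws : ∀ β : α, (wstar (π t) {β}).toReal = if bsel (π t) = β then 1 else 0 := by
      intro β
      have : wstar (π t) {β} = if bsel (π t) = β then 1 else 0 := by
        rw [show wstar (π t) = Measure.dirac (bsel (π t)) from rfl,
          Measure.dirac_apply' _ (measurableSet_singleton β), Set.indicator_apply]
        simp [Set.mem_singleton_iff]
      rw [this]
      split_ifs <;> simp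
    calc ∑ β : α, (wstar (π t) {β}).toReal * ρ β t
        = ∑ β : α, if bsel (π t) = β then ρ β t else 0 := Finset.sum_congr rfl fun β _ => by
          rw [hws β, ite_mul, one_mul, zero_mul]
      _ = ρ (bsel (π t)) t := by rw [Finset.sum_ite_eq]; exact if_pos (Finset.mem_univ _)
      _ = mn t := hkey t
  -- integrability and nonnegativity facts
  have hsum1 : ∀ s : S, ∑ β : α, (q s {β}).toReal = 1 := fun s => by
    haveI := hq.1 s; exact sum_toReal_singleton (q s)
  have hGnn : ∀ t, 0 ≤ (∑ β : α, (q (π t) {β}).toReal * ρ β t) - mn t := by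
    intro t
    rw [sub_nonneg]
    calc mn t = ∑ β : α, (q (π t) {β}).toReal * mn t := by
          rw [← Finset.sum_mul, hsum1, one_mul]
      _ ≤ ∑ β : α, (q (π t) {β}).toReal * ρ β t :=
          Finset.sum_le_sum fun β _ =>
            mul_le_mul_of_nonneg_left (hmn_le t β) ENNReal.toReal_nonneg
  have hqρint : Integrable (fun t => ∑ β : α, (q (π t) {β}).toReal * ρ β t) ν :=
    integrable_finset_sum _ fun β _ => hwint q hq (ρ β) (hρint β) β
  have hGint : Integrable (fun t => (∑ β : α, (q (π t) {β}).toReal * ρ β t) - mn t) ν :=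
    hqρint.sub hmnint
  have hq1 : ∫ t, ∑ β : α, (q (π t) {β}).toReal * ρ β t ∂ν = 0 := (K1 q hq).symm.trans hFq
  have hIG : ∫ t, ((∑ β : α, (q (π t) {β}).toReal * ρ β t) - mn t) ∂ν = - ∫ t, mn t ∂ν := by
    rw [integral_sub hqρint hmnint, hq1, zero_sub]
  have hmn0 : ∫ t, mn t ∂ν = 0 := by
    have h1 : 0 ≤ ∫ t, mn t ∂ν := hFstar ▸ hF0 wstar hwstar
    have h2 : 0 ≤ - ∫ t, mn t ∂ν := hIG ▸ integral_nonneg hGnn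
    linarith
  have hGzero : ∀ᵐ t ∂ν, (∑ β : α, (q (π t) {β}).toReal * ρ β t) - mn t = 0 := by
    have h := (integral_eq_zero_iff_of_nonneg hGnn hGint).1 (by rw [hIG, hmn0, neg_zero])
    filter_upwards [h] with t ht
    exact ht
  have hae : ∀ᵐ t ∂ν, ∀ β : α, ρ β t = mn t := by
    filter_upwards [hGzero] with t ht
    intro β
    have hterms : ∀ β' ∈ Finset.univ, 0 ≤ (q (π t) {β'}).toReal * (ρ β' t - mn t) :=
      fun β' _ => mul_nonneg ENNReal.toReal_nonneg (sub_nonneg.2 (hmn_le t β'))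
    have hexp : ∑ β' : α, (q (π t) {β'}).toReal * (ρ β' t - mn t)
        = (∑ β' : α, (q (π t) {β'}).toReal * ρ β' t) - mn t := by
      simp_rw [mul_sub]
      rw [Finset.sum_sub_distrib, ← Finset.sum_mul, hsum1, one_mul]
    have h0 := (Finset.sum_eq_zero_iff_of_nonneg hterms).1 (hexp.trans ht) β (Finset.mem_univ β)
    have hpos : 0 < (q (π t) {β}).toReal := by
      haveI := hq.1 (π t)
      exact ENNReal.toReal_pos (hqpos (π t) β).ne' (measure_ne_top _ _)
    rcases mul_eq_zero.1 h0 with h | h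
    · exact absurd h hpos.ne'
    · linarith [sub_eq_zero.1 h]
  intro w hw
  rw [K1 w hw]
  have hfin : ∫ t, ∑ β : α, (w (π t) {β}).toReal * ρ β t ∂ν = ∫ t, mn t ∂ν := by
    refine integral_congr_ae ?_
    filter_upwards [hae] with t ht
    have hsumw : ∑ β : α, (w (π t) {β}).toReal = 1 := by
      haveI := hw.1 (π t); exact sum_toReal_singleton (w (π t))
    calc ∑ β : α, (w (π t) {β}).toReal * ρ β t
        = ∑ β : α, (w (π t) {β}).toReal * mn t :=
          Finset.sum_congr rfl fun β _ => by rw [ht β]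
      _ = mn t := by rw [← Finset.sum_mul, hsumw, one_mul]
  rw [hfin, hmn0]

end PC

section Aux

variable {n : ℕ} {A : Fin n → Type*} {T : Fin n → Type*}
  [∀ i, MeasurableSpace (A i)] [∀ i, MeasurableSpace (T i)]

/-- Interim payoff against mixed strategies, written as a finite weighted sum. -/
lemma interim_eq_sum [∀ i, Fintype (A i)] [∀ i, MeasurableSingletonClass (A i)]
    (u : ∀ _ : Fin n, (∀ j, A j) → (∀ j, T j) → ℝ)
    (cond : ∀ i, T i → Measure (∀ j, T j))
    (i : Fin n) (a : A i) (t : T i)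
    (g : ∀ j, T j → Measure (A j)) (hg : ∀ j, IsMixedStrategy (g j)) :
    interim u cond i a t g = ∫ s, ∑ b : ∀ j, A j,
      (∏ j, (g j (s j) {b j}).toReal) * u i (Function.update b i a) (Function.update s i t)
      ∂(cond i t) := by
  unfold interim
  refine integral_congr_ae (Filter.Eventually.of_forall fun s => ?_)
  haveI : ∀ j, IsProbabilityMeasure (g j (s j)) := fun j => (hg j).1 (s j)
  show (∫ b, u i (Function.update b i a) (Function.update s i t) ∂(Measure.pi fun j => g j (s j)))
      = ∑ b : ∀ j, A j, (∏ j, (g j (s j) {b j}).toReal) *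
          u i (Function.update b i a) (Function.update s i t)
  rw [integral_fintype (Integrable.of_finite)]
  refine Finset.sum_congr rfl fun b _ => ?_
  rw [smul_eq_mul]
  congr 1
  have h1 : ({b} : Set (∀ j, A j)) = Set.pi Set.univ (fun j => {b j}) := by
    rw [Set.univ_pi_singleton]
  rw [h1, measureReal_def, Measure.pi_pi, ENNReal.toReal_prod]

/-- A product of strategy weights times a bounded measurable function is integrable. -/
lemma integrable_weighted [∀ i, Fintype (A i)] [∀ i, MeasurableSingletonClass (A i)]
    (ν : Measure (∀ j, T j)) [IsProbabilityMeasure ν] (J : Finset (Fin n))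
    (g : ∀ j, T j → Measure (A j)) (hg : ∀ j, IsMixedStrategy (g j))
    (b : ∀ j, A j) (φ : (∀ j, T j) → ℝ) (hφm : Measurable φ) (C : ℝ)
    (hφb : ∀ s, |φ s| ≤ C) :
    Integrable (fun s => (∏ j ∈ J, (g j (s j) {b j}).toReal) * φ s) ν := by
  have hφint : Integrable φ ν := by
    refine Integrable.mono' (integrable_const C) hφm.aestronglyMeasurable
      (Filter.Eventually.of_forall fun s => ?_)
    rw [Real.norm_eq_abs]; exact hφb s
  refine hφint.bdd_mul (c := 1) ?_ (Filter.Eventually.of_forall fun s => ?_)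
  · refine (Finset.measurable_prod J fun j _ => ?_).aestronglyMeasurable
    exact (((hg j).2 {b j} (measurableSet_singleton _)).comp
      (measurable_pi_apply j)).ennreal_toReal
  · rw [Real.norm_eq_abs, abs_of_nonneg (Finset.prod_nonneg fun j _ => ENNReal.toReal_nonneg)]
    refine Finset.prod_le_one (fun j _ => ENNReal.toReal_nonneg) (fun j _ => ?_)
    haveI := (hg j).1 (s j)
    simpa using ENNReal.toReal_mono ENNReal.one_ne_top prob_le_one

lemma integrable_weighted_sum [∀ i, Fintype (A i)] [∀ i, MeasurableSingletonClass (A i)]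
    (ν : Measure (∀ j, T j)) [IsProbabilityMeasure ν]
    (g : ∀ j, T j → Measure (A j)) (hg : ∀ j, IsMixedStrategy (g j))
    (φ : (∀ j, A j) → (∀ j, T j) → ℝ) (hφm : ∀ b, Measurable (φ b)) (C : ℝ)
    (hφb : ∀ b s, |φ b s| ≤ C) :
    Integrable (fun s => ∑ b : ∀ j, A j,
      (∏ j, (g j (s j) {b j}).toReal) * φ b s) ν :=
  integrable_finset_sum _ fun b _ =>
    integrable_weighted ν Finset.univ g hg b (φ b) (hφm b) C (hφb b)

end Aux


/-- **Lemma.**  With finite action spaces, any perfect monotone equilibrium is admissible. -/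
theorem admissible_of_perfect_monotone_equilibrium_finite
    {n : ℕ} (hn : 2 ≤ n)
    (A : Fin n → Type*) (T : Fin n → Type*)
    [∀ i, MetricSpace (A i)] [∀ i, CompactSpace (A i)] [∀ i, Lattice (A i)]
    [∀ i, MeasurableSpace (A i)] [∀ i, BorelSpace (A i)]
    [∀ i, MeasurableSpace (T i)] [∀ i, PartialOrder (T i)]
    -- the action spaces are finite
    [∀ i, Finite (A i)]
    -- the common prior, with atomless marginals
    (prior : Measure (∀ j, T j)) [IsProbabilityMeasure prior]
    (hatomless : ∀ i, NoAtoms (prior.map fun τ => τ i))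
    -- payoffs: bounded, jointly measurable, continuous in actions
    (u : ∀ _ : Fin n, (∀ j, A j) → (∀ j, T j) → ℝ)
    (hubdd : ∃ M : ℝ, ∀ i a t, |u i a t| ≤ M)
    (humeas : ∀ i, Measurable fun p : (∀ j, A j) × (∀ j, T j) => u i p.1 p.2)
    (hucont : ∀ i t, Continuous fun a => u i a t)
    -- a version of the conditional distribution of the type profile given one's own type
    (cond : ∀ i, T i → Measure (∀ j, T j))
    (hcondprob : ∀ i t, IsProbabilityMeasure (cond i t))
    (hcondmeas : ∀ i (e : Set (∀ j, T j)), MeasurableSet e → Measurable fun t => cond i t e)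
    (hconddis : ∀ i (e : Set (∀ j, T j)), MeasurableSet e →
      ∫⁻ τ, cond i (τ i) e ∂prior = prior e)
    -- a perfect monotone equilibrium
    (g : ∀ i, T i → A i) (hgmeas : ∀ i, Measurable (g i)) (hgmono : ∀ i, Monotone (g i))
    (hBNE : IsBNE u cond prior g) (hperfect : IsPerfect u cond prior g) :
    -- admissibility: almost every equilibrium action is undominated
    ∀ i, ∀ᵐ t ∂(prior.map fun τ => τ i), ¬ WeaklyDominated u cond i (g i t) t := by
  classical
  haveI hFin : ∀ j, Fintype (A j) := fun j => Fintype.ofFinite _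
  haveI hTne : Nonempty (∀ j, T j) := by
    by_contra hcon
    rw [not_nonempty_iff] at hcon
    have h1 : prior Set.univ = 1 := measure_univ
    rw [Set.univ_eq_empty_iff.2 hcon, measure_empty] at h1
    exact zero_ne_one h1
  haveI hAne : ∀ j, Nonempty (A j) :=
    fun j => ⟨g j ((Classical.arbitrary (∀ l, T l)) j)⟩
  intro i
  obtain ⟨M, hM⟩ := hubdd
  obtain ⟨gk, hgkmix, hgkcm, hgkae⟩ := hperfect
  filter_upwards [hgkae i] with t ht
  obtain ⟨-, hBRten⟩ := ht
  intro hWD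
  obtain ⟨σ, hσprob, hσle, gg, hggmix, hgglt⟩ := hWD
  haveI := hσprob
  -- every best-response set is nonempty
  have hBRne : ∀ k, (BR u cond i t (gk k)).Nonempty := by
    intro k
    obtain ⟨a0, ha0⟩ := Finite.exists_max (fun a' : A i => interim u cond i a' t (gk k))
    exact ⟨a0, ha0⟩
  -- the equilibrium action is an exact best response to some completely mixed profile
  have hexK : ∃ K, g i t ∈ BR u cond i t (gk K) := by
    by_contra hcon
    push_neg at hcon
    rcases eq_or_ne (Finset.univ.erase (g i t)) ∅ with hE | hE
    · obtain ⟨a0, ha0⟩ := hBRne 0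
      have ha0' : a0 = g i t := by
        by_contra hne
        have hmem : a0 ∈ Finset.univ.erase (g i t) :=
          Finset.mem_erase.2 ⟨hne, Finset.mem_univ _⟩
        rw [hE] at hmem
        exact absurd hmem (Finset.notMem_empty _)
      exact hcon 0 (ha0' ▸ ha0)
    · have hFne : (Finset.univ.erase (g i t)).Nonempty := Finset.nonempty_iff_ne_empty.2 hE
      have hδpos : 0 < (Finset.univ.erase (g i t)).inf' hFne (fun y => dist (g i t) y) := by
        rw [Finset.lt_inf'_iff]
        intro y hy
        exact dist_pos.2 (Ne.symm (Finset.mem_erase.1 hy).1)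
      obtain ⟨k, hk⟩ := (hBRten.eventually_lt_const hδpos).exists
      obtain ⟨y, hyBR, hydist⟩ := (infDist_lt_iff (hBRne k)).1 hk
      have hyne : y ≠ g i t := fun h => hcon k (h ▸ hyBR)
      have hge : (Finset.univ.erase (g i t)).inf' hFne (fun y => dist (g i t) y)
          ≤ dist (g i t) y :=
        Finset.inf'_le _ (Finset.mem_erase.2 ⟨hyne, Finset.mem_univ _⟩)
      linarith
  obtain ⟨K, hxBR⟩ := hexK
  set q : ∀ j, T j → Measure (A j) := gk K with hqdef
  have hqmix : ∀ j, IsMixedStrategy (q j) := hgkmix K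
  have hqpos : ∀ (j : Fin n) (s : T j) (β : A j), 0 < q j s {β} := by
    intro j s β
    exact hgkcm K j s {β} (isOpen_discrete _) ⟨β, rfl⟩
  set ν : Measure (∀ j, T j) := cond i t with hνdef
  haveI : IsProbabilityMeasure ν := hcondprob i t
  set a : A i := g i t with hadef
  set c : (∀ l, A l) → (∀ l, T l) → ℝ := fun b s =>
    (∑ a' : A i, (σ {a'}).toReal * u i (Function.update b i a') (Function.update s i t))
      - u i (Function.update b i a) (Function.update s i t) with hcdef
  have hum : ∀ (b : ∀ l, A l) (a' : A i),
      Measurable (fun s : ∀ l, T l => u i (Function.update b i a') (Function.update s i t)) :=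
    fun b a' => (humeas i).comp (measurable_const.prodMk measurable_update_left)
  have hcm : ∀ b, Measurable (c b) := by
    intro b
    rw [hcdef]
    exact (Finset.measurable_sum _ fun a' _ => (hum b a').const_mul _).sub (hum b a)
  have hcb : ∀ b s, |c b s| ≤ M + M := by
    intro b s
    have h1 : |∑ a' : A i, (σ {a'}).toReal *
        u i (Function.update b i a') (Function.update s i t)| ≤ M := by
      calc |∑ a' : A i, (σ {a'}).toReal *
          u i (Function.update b i a') (Function.update s i t)|
          ≤ ∑ a' : A i, |(σ {a'}).toReal *
            u i (Function.update b i a') (Function.update s i t)| :=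
            Finset.abs_sum_le_sum_abs _ _
        _ ≤ ∑ a' : A i, (σ {a'}).toReal * M := by
            refine Finset.sum_le_sum fun a' _ => ?_
            rw [abs_mul, abs_of_nonneg ENNReal.toReal_nonneg]
            exact mul_le_mul_of_nonneg_left (hM i _ _) ENNReal.toReal_nonneg
        _ = M := by rw [← Finset.sum_mul, sum_toReal_singleton σ, one_mul]
    have h2 : |u i (Function.update b i a) (Function.update s i t)| ≤ M := hM i _ _
    calc |c b s| ≤ |∑ a' : A i, (σ {a'}).toReal *
          u i (Function.update b i a') (Function.update s i t)|
          + |u i (Function.update b i a) (Function.update s i t)| := by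
          rw [hcdef]; exact abs_sub _ _
      _ ≤ M + M := add_le_add h1 h2
  -- the dominance gap as a weighted integral
  have hDform : ∀ (h : ∀ l, T l → Measure (A l)), (∀ l, IsMixedStrategy (h l)) →
      (∫ a', interim u cond i a' t h ∂σ) - interim u cond i a t h
        = ∫ s, ∑ b : ∀ l, A l, (∏ l, (h l (s l) {b l}).toReal) * c b s ∂ν := by
    intro h hh
    have hint_a : ∀ a' : A i, Integrable (fun s => ∑ b : ∀ l, A l,
        (∏ l, (h l (s l) {b l}).toReal) *
          u i (Function.update b i a') (Function.update s i t)) ν :=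
      fun a' => integrable_weighted_sum ν h hh _ (fun b => hum b a') M (fun b s => hM i _ _)
    have hint1 : Integrable (fun s => ∑ a' : A i, (σ {a'}).toReal •
        ∑ b : ∀ l, A l, (∏ l, (h l (s l) {b l}).toReal) *
          u i (Function.update b i a') (Function.update s i t)) ν :=
      integrable_finset_sum _ fun a' _ => (hint_a a').smul ((σ {a'}).toReal)
    have h1 : ∫ a', interim u cond i a' t h ∂σ
        = ∫ s, ∑ a' : A i, (σ {a'}).toReal •
            ∑ b : ∀ l, A l, (∏ l, (h l (s l) {b l}).toReal) *
              u i (Function.update b i a') (Function.update s i t) ∂ν := by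
      calc ∫ a', interim u cond i a' t h ∂σ
          = ∑ a' : A i, (σ {a'}).toReal • interim u cond i a' t h :=
            integral_fintype Integrable.of_finite
        _ = ∑ a' : A i, ∫ s, (σ {a'}).toReal •
              ∑ b : ∀ l, A l, (∏ l, (h l (s l) {b l}).toReal) *
                u i (Function.update b i a') (Function.update s i t) ∂ν := by
            refine Finset.sum_congr rfl fun a' _ => ?_
            rw [interim_eq_sum u cond i a' t h hh, ← integral_smul]
        _ = ∫ s, ∑ a' : A i, (σ {a'}).toReal •
              ∑ b : ∀ l, A l, (∏ l, (h l (s l) {b l}).toReal) *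
                u i (Function.update b i a') (Function.update s i t) ∂ν :=
            (integral_finset_sum _ fun a' _ => (hint_a a').smul ((σ {a'}).toReal)).symm
    rw [h1, interim_eq_sum u cond i a t h hh, ← integral_sub hint1 (hint_a a)]
    refine integral_congr_ae (Filter.Eventually.of_forall fun s => ?_)
    simp only [smul_eq_mul]
    calc (∑ a' : A i, (σ {a'}).toReal * ∑ b : ∀ l, A l,
          (∏ l, (h l (s l) {b l}).toReal) *
            u i (Function.update b i a') (Function.update s i t))
          - ∑ b : ∀ l, A l, (∏ l, (h l (s l) {b l}).toReal) *
            u i (Function.update b i a) (Function.update s i t)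
        = (∑ b : ∀ l, A l, (∏ l, (h l (s l) {b l}).toReal) *
            ∑ a' : A i, (σ {a'}).toReal *
              u i (Function.update b i a') (Function.update s i t))
          - ∑ b : ∀ l, A l, (∏ l, (h l (s l) {b l}).toReal) *
            u i (Function.update b i a) (Function.update s i t) := by
          congr 1
          calc ∑ a' : A i, (σ {a'}).toReal * ∑ b : ∀ l, A l,
                (∏ l, (h l (s l) {b l}).toReal) *
                  u i (Function.update b i a') (Function.update s i t)
              = ∑ a' : A i, ∑ b : ∀ l, A l, (σ {a'}).toReal *
                  ((∏ l, (h l (s l) {b l}).toReal) *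
                    u i (Function.update b i a') (Function.update s i t)) := by
                refine Finset.sum_congr rfl fun a' _ => ?_
                rw [Finset.mul_sum]
            _ = ∑ b : ∀ l, A l, ∑ a' : A i, (σ {a'}).toReal *
                  ((∏ l, (h l (s l) {b l}).toReal) *
                    u i (Function.update b i a') (Function.update s i t)) :=
                Finset.sum_comm
            _ = ∑ b : ∀ l, A l, (∏ l, (h l (s l) {b l}).toReal) *
                  ∑ a' : A i, (σ {a'}).toReal *
                    u i (Function.update b i a') (Function.update s i t) := by
                refine Finset.sum_congr rfl fun b _ => ?_
                rw [Finset.mul_sum]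
                exact Finset.sum_congr rfl fun a' _ => by ring
      _ = ∑ b : ∀ l, A l, (∏ l, (h l (s l) {b l}).toReal) * c b s := by
          rw [← Finset.sum_sub_distrib]
          refine Finset.sum_congr rfl fun b _ => ?_
          rw [hcdef, mul_sub]
  -- basic facts about the gap
  have hD0 : ∀ (h : ∀ l, T l → Measure (A l)), (∀ l, IsMixedStrategy (h l)) →
      0 ≤ ∫ s, ∑ b : ∀ l, A l, (∏ l, (h l (s l) {b l}).toReal) * c b s ∂ν := by
    intro h hh
    rw [← hDform h hh]
    exact sub_nonneg.2 (hσle h hh)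
  have hDq0 : ∫ s, ∑ b : ∀ l, A l, (∏ l, (q l (s l) {b l}).toReal) * c b s ∂ν = 0 := by
    refine le_antisymm ?_ (hD0 q hqmix)
    rw [← hDform q hqmix]
    have hle : ∫ a', interim u cond i a' t q ∂σ ≤ interim u cond i a t q := by
      have h1 : ∫ a', interim u cond i a' t q ∂σ
          ≤ ∫ _, interim u cond i a t q ∂σ :=
        integral_mono Integrable.of_finite Integrable.of_finite (fun a' => hxBR a')
      rwa [integral_const, probReal_univ, one_smul] at h1
    linarith
  have hDgpos : 0 < ∫ s, ∑ b : ∀ l, A l, (∏ l, (gg l (s l) {b l}).toReal) * c b s ∂ν := by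
    rw [← hDform gg hggmix]
    exact sub_pos.2 hgglt
  -- inductive replacement of the coordinates by the dominance witness
  have key : ∀ L : Finset (Fin n),
      ∫ s, ∑ b : ∀ l, A l,
        (∏ l, ((if l ∈ L then gg l else q l) (s l) {b l}).toReal) * c b s ∂ν = 0 := by
    intro L
    induction L using Finset.induction_on with
    | empty => simpa using hDq0
    | @insert j L hjL ih =>
        set P : ∀ l, T l → Measure (A l) := fun l => if l ∈ L then gg l else q l with hPdef
        have hPmix : ∀ l, IsMixedStrategy (P l) := by
          intro l
          rw [hPdef]
          by_cases hl : l ∈ L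
          · simp only [if_pos hl]; exact hggmix l
          · simp only [if_neg hl]; exact hqmix l
        have hPj : P j = q j := by rw [hPdef]; simp only [if_neg hjL]
        have hupd_mix : ∀ (w : T j → Measure (A j)), IsMixedStrategy w →
            ∀ l, IsMixedStrategy (Function.update P j w l) := by
          intro w hw l
          by_cases hl : l = j
          · subst hl; rw [Function.update_self]; exact hw
          · rw [Function.update_of_ne hl]; exact hPmix l
        set r : A j → (∀ l, T l) → ℝ := fun β s =>
          ∑ b : ∀ l, A l, if b j = β then
            (∏ l ∈ Finset.univ.erase j, (P l (s l) {b l}).toReal) * c b s else 0 with hrdef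
        have hrint : ∀ β, Integrable (r β) ν := by
          intro β
          rw [hrdef]
          refine integrable_finset_sum _ fun b _ => ?_
          by_cases hbj : b j = β
          · simp only [if_pos hbj]
            exact integrable_weighted ν _ P hPmix b (c b) (hcm b) (M + M) (hcb b)
          · simp only [if_neg hbj]
            exact integrable_zero _ _ _
        have hshape : ∀ (w : T j → Measure (A j)),
            ∫ s, ∑ b : ∀ l, A l,
              (∏ l, (Function.update P j w l (s l) {b l}).toReal) * c b s ∂ν
            = ∫ s, ∑ β : A j, (w (s j) {β}).toReal * r β s ∂ν := by
          intro w
          refine integral_congr_ae (Filter.Eventually.of_forall fun s => ?_)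
          show ∑ b : ∀ l, A l, (∏ l, (Function.update P j w l (s l) {b l}).toReal) * c b s
              = ∑ β : A j, (w (s j) {β}).toReal * r β s
          have hLHS : ∀ b : ∀ l, A l,
              (∏ l, (Function.update P j w l (s l) {b l}).toReal)
                = (w (s j) {b j}).toReal *
                  ∏ l ∈ Finset.univ.erase j, (P l (s l) {b l}).toReal := by
            intro b
            rw [← Finset.mul_prod_erase Finset.univ _ (Finset.mem_univ j),
              Function.update_self]
            congr 1
            refine Finset.prod_congr rfl fun l hl => ?_
            rw [Function.update_of_ne (Finset.mem_erase.1 hl).1]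
          have hRHS : ∑ β : A j, (w (s j) {β}).toReal * r β s
              = ∑ b : ∀ l, A l, (w (s j) {b j}).toReal *
                  ((∏ l ∈ Finset.univ.erase j, (P l (s l) {b l}).toReal) * c b s) := by
            calc ∑ β : A j, (w (s j) {β}).toReal * r β s
                = ∑ β : A j, ∑ b : ∀ l, A l, if b j = β then
                    (w (s j) {β}).toReal *
                      ((∏ l ∈ Finset.univ.erase j, (P l (s l) {b l}).toReal) * c b s)
                    else 0 := by
                  refine Finset.sum_congr rfl fun β _ => ?_
                  rw [hrdef, Finset.mul_sum]
                  refine Finset.sum_congr rfl fun b _ => ?_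
                  rw [mul_ite, mul_zero]
              _ = ∑ b : ∀ l, A l, ∑ β : A j, if b j = β then
                    (w (s j) {β}).toReal *
                      ((∏ l ∈ Finset.univ.erase j, (P l (s l) {b l}).toReal) * c b s)
                    else 0 := Finset.sum_comm
              _ = ∑ b : ∀ l, A l, (w (s j) {b j}).toReal *
                    ((∏ l ∈ Finset.univ.erase j, (P l (s l) {b l}).toReal) * c b s) := by
                  refine Finset.sum_congr rfl fun b _ => ?_
                  rw [Finset.sum_ite_eq]
                  exact if_pos (Finset.mem_univ _)
          rw [hRHS]
          refine Finset.sum_congr rfl fun b _ => ?_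
          rw [hLHS b, mul_assoc]
        have hpc := pc_lemma (Tt := ∀ l, T l) (S := T j) (α := A j) ν
          (fun s => s j) (measurable_pi_apply j) r hrint
          (fun w => ∫ s, ∑ b : ∀ l, A l,
            (∏ l, (Function.update P j w l (s l) {b l}).toReal) * c b s ∂ν)
          (fun w _ => hshape w)
          (fun w hw => hD0 _ (hupd_mix w hw))
          (P j) (hPmix j)
          (fun s β => by rw [hPj]; exact hqpos j s β)
          (by show (∫ s, ∑ b : ∀ l, A l,
                (∏ l, (Function.update P j (P j) l (s l) {b l}).toReal) * c b s ∂ν) = 0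
              rw [Function.update_eq_self j P]
              exact ih)
        have hres := hpc (gg j) (hggmix j)
        have hprofile : Function.update P j (gg j)
            = fun l => if l ∈ insert j L then gg l else q l := by
          funext l
          by_cases hl : l = j
          · subst hl
            rw [Function.update_self, if_pos (Finset.mem_insert_self _ _)]
          · rw [Function.update_of_ne hl]
            simp only [hPdef]
            by_cases hlL : l ∈ L
            · rw [if_pos hlL, if_pos (Finset.mem_insert_of_mem hlL)]
            · rw [if_neg hlL, if_neg (by simp [Finset.mem_insert, hl, hlL])]
        have c2 := congrArg (fun (h : ∀ l, T l → Measure (A l)) =>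
          ∫ s, ∑ b : ∀ l, A l, (∏ l, (h l (s l) {b l}).toReal) * c b s ∂ν) hprofile
        exact c2.symm.trans hres
  have hfinal : ∫ s, ∑ b : ∀ l, A l, (∏ l, (gg l (s l) {b l}).toReal) * c b s ∂ν = 0 := by
    have h := key Finset.univ
    simpa using h
  linarith

end

end MonotonePerfection
end

section
/- In the two-player binary-action example game, each player i's interim payoff V_i(a_i, t_i; s_j) satisfies the single crossing condition in (a_i, t_i) whenever the opponent j adopts a monotone strategy s_j. -/
/-!
A monotone strategy of the opponent is a threshold strategy: it plays `1` below some type `c`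
and `2` above it. Against such a strategy, player 1's gain from switching from action `1` to
action `2` is `(7 - 8c)(6 + c - 4 t₁)/24`, and the second factor is at least `2` on `[0,1]`; so
the sign of the gain does not depend on `t₁`. Player 2's interim payoff does not depend on
`t₂` at all. A payoff difference whose sign is independent of the type crosses zero at most
once, which is the single crossing condition.
-/

open MeasureTheory Filter Metric

namespace MonotonePerfection

noncomputable section

/-- The single crossing condition for  in . -/
def SingleCrossing {X Y : Type*} [Preorder X] [Preorder Y] (h : X → Y → ℝ) : Prop :=
  ∀ ⦃x x' : X⦄ ⦃y y' : Y⦄, x < x' → y < y' →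
    (h x y ≤ h x' y → h x y' ≤ h x' y') ∧ (h x y < h x' y → h x y' < h x' y')

/-- The binary action space `{1, 2}` of the example game. -/
abbrev Act12 : Type := {a : ℕ // a = 1 ∨ a = 2}

/-- The type space `[0,1]` of the example game. -/
abbrev T01 : Type := ↥(Set.Icc (0:ℝ) 1)

/-- Lebesgue (= uniform) measure on `[0,1]`. -/
noncomputable def μ01 : Measure T01 := (volume : Measure ℝ).comap Subtype.val

/-- Player 1's payoff in the example game (first action is player 1's). -/
noncomputable def u1 (a1 a2 : Act12) (t1 t2 : ℝ) : ℝ :=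
  if a1.1 = 1 then
    (if a2.1 = 1 then 5/2 - 4/3 * t1 else 1/2 + 1/2 * t2)
  else
    (if a2.1 = 1 then 55/24 - t2/6 - 7/6 * t1 else 2 + t2 - 7/6 * t1)

/-- Player 2's payoff in the example game, depending only on the actions. -/
noncomputable def u2 (a1 a2 : Act12) : ℝ :=
  if a1.1 = 1 then (if a2.1 = 1 then -1 else 1)
  else (if a2.1 = 1 then 7 else -1)

/-- Player 1's interim payoff against a pure strategy of player 2 (types are independent
and uniform on `[0,1]`). -/
noncomputable def V1p (a : Act12) (t1 : T01) (s2 : T01 → Act12) : ℝ :=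
  ∫ t2 : T01, u1 a (s2 t2) (t1 : ℝ) (t2 : ℝ) ∂μ01

/-- Player 2's interim payoff against a pure strategy of player 1. -/
noncomputable def V2p (a : Act12) (t2 : T01) (s1 : T01 → Act12) : ℝ :=
  ∫ t1 : T01, u2 (s1 t1) a ∂μ01

theorem singleCrossing_of_sign_sub_eq {X Y : Type*} [Preorder X] [Preorder Y] {h : X → Y → ℝ}
    (hsign : ∀ ⦃x x' : X⦄, x < x' → ∀ y y' : Y,
      SignType.sign (h x' y - h x y) = SignType.sign (h x' y' - h x y')) :
    SingleCrossing h := by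
  intro x x' y y' hx _
  refine ⟨fun h => ?_, fun h => ?_⟩
  · rwa [← sub_nonneg, ← sign_nonneg_iff, ← hsign hx y, sign_nonneg_iff, sub_nonneg]
  · rwa [← sub_pos, ← sign_eq_one_iff, ← hsign hx y, sign_eq_one_iff, sub_pos]

theorem Monotone.exists_threshold {α : Type*} [CompleteLinearOrder α] {P : α → Prop}
    (hP : Monotone P) : ∃ c : α, ∀ t, (t < c → ¬ P t) ∧ (c < t → P t) := by
  refine ⟨sInf {t | P t}, fun t => ⟨fun ht hPt => (sInf_le hPt).not_gt ht, fun ht => ?_⟩⟩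
  obtain ⟨t', hPt', ht'⟩ := sInf_lt_iff.mp ht
  exact hP ht'.le hPt'

def act1 : Act12 := ⟨1, Or.inl rfl⟩

def act2 : Act12 := ⟨2, Or.inr rfl⟩

theorem act_eq (a : Act12) : a = act1 ∨ a = act2 :=
  a.2.imp Subtype.ext Subtype.ext

theorem act1_lt_iff {a : Act12} : act1 < a ↔ a = act2 := by
  rcases act_eq a with rfl | rfl <;> decide

theorem act_lt_iff {a a' : Act12} : a < a' ↔ a = act1 ∧ a' = act2 := by
  rcases act_eq a with rfl | rfl <;> rcases act_eq a' with rfl | rfl <;> decide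

def IsThreshold (s : T01 → Act12) (c : T01) : Prop :=
  ∀ t, (t < c → s t = act1) ∧ (c < t → s t = act2)

theorem exists_isThreshold_of_monotone {s : T01 → Act12} (hs : Monotone s) :
    ∃ c, IsThreshold s c := by
  have : Fact ((0 : ℝ) ≤ 1) := ⟨zero_le_one⟩
  obtain ⟨c, hc⟩ := Monotone.exists_threshold (P := fun t => act1 < s t)
    fun _ _ htt' h => h.trans_le (hs htt')
  refine ⟨c, fun t => ⟨fun ht => ?_, fun ht => act1_lt_iff.mp ((hc t).2 ht)⟩⟩
  exact (act_eq (s t)).resolve_right fun h => (hc t).1 ht (act1_lt_iff.mpr h)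

theorem integral_μ01 (f : ℝ → ℝ) : ∫ t, f t ∂μ01 = ∫ x in (0 : ℝ)..1, f x := by
  rw [μ01, integral_subtype_comap measurableSet_Icc, intervalIntegral.integral_of_le zero_le_one,
    integral_Icc_eq_integral_Ioc]

theorem integral_eq_of_affine {f : ℝ → ℝ} {p q : ℝ} (hf : ∀ x, f x = p + q * x)
    (a b : ℝ) : ∫ x in a..b, f x = p * (b - a) + q * (b ^ 2 - a ^ 2) / 2 := by
  simp_rw [hf]
  rw [intervalIntegral.integral_add intervalIntegrable_const
    (intervalIntegral.intervalIntegrable_id.const_mul q), intervalIntegral.integral_const_mul,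
    integral_id, intervalIntegral.integral_const, smul_eq_mul]
  ring

theorem continuous_u1 (a a' : Act12) (t1 : ℝ) : Continuous (u1 a a' t1) := by
  unfold u1; split_ifs <;> fun_prop

section Threshold

variable {s : T01 → Act12} {c : T01}

theorem V1p_eq_of_isThreshold (hs : IsThreshold s c) (a : Act12) (t1 : T01) :
    V1p a t1 s =
      (∫ x in (0 : ℝ)..c, u1 a act1 t1 x) + ∫ x in (c : ℝ)..1, u1 a act2 t1 x := by
  -- `projIcc` extends `s` to `ℝ`, so that `V1p` becomes an interval integral.
  set G : ℝ → ℝ := fun x => u1 a (s (Set.projIcc 0 1 zero_le_one x)) t1 x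
  have hV : V1p a t1 s = ∫ x in (0 : ℝ)..1, G x := by
    rw [V1p, ← integral_μ01]
    simp only [G, Set.projIcc_val]
  have hc := c.2
  have h1 : Set.EqOn G (u1 a act1 t1) (Set.uIoo 0 c) := by
    intro x hx
    rw [Set.uIoo_of_le hc.1] at hx
    have hx01 : x ∈ Set.Icc (0 : ℝ) 1 := ⟨hx.1.le, hx.2.le.trans hc.2⟩
    simp only [G, Set.projIcc_of_mem _ hx01, (hs _).1 (Subtype.mk_lt_mk.mpr hx.2)]
  have h2 : Set.EqOn G (u1 a act2 t1) (Set.uIoo c 1) := by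
    intro x hx
    rw [Set.uIoo_of_le hc.2] at hx
    have hx01 : x ∈ Set.Icc (0 : ℝ) 1 := ⟨hc.1.trans hx.1.le, hx.2.le⟩
    simp only [G, Set.projIcc_of_mem _ hx01, (hs _).2 (Subtype.mk_lt_mk.mpr hx.1)]
  rw [hV, ← intervalIntegral.integral_add_adjacent_intervals
      (((continuous_u1 _ _ _).intervalIntegrable _ _).congr_uIoo h1.symm)
      (((continuous_u1 _ _ _).intervalIntegrable _ _).congr_uIoo h2.symm),
    intervalIntegral.integral_congr_uIoo h1, intervalIntegral.integral_congr_uIoo h2]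

theorem V1p_act2_sub_act1_of_isThreshold (hs : IsThreshold s c) (t1 : T01) :
    V1p act2 t1 s - V1p act1 t1 s = (7 - 8 * c) * (6 + c - 4 * t1) / 24 := by
  rw [V1p_eq_of_isThreshold hs, V1p_eq_of_isThreshold hs,
    integral_eq_of_affine (p := 55/24 - 7/6 * t1) (q := -1/6)
      (fun _ => by simp [u1, act1, act2]; ring),
    integral_eq_of_affine (p := 2 - 7/6 * t1) (q := 1) (fun _ => by simp [u1, act2]; ring),
    integral_eq_of_affine (p := 5/2 - 4/3 * t1) (q := 0) (fun _ => by simp [u1, act1]),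
    integral_eq_of_affine (p := 1/2) (q := 1/2) (fun _ => by simp [u1, act1, act2])]
  ring

theorem sign_V1p_act2_sub_act1_of_isThreshold (hs : IsThreshold s c) (t1 : T01) :
    SignType.sign (V1p act2 t1 s - V1p act1 t1 s) = SignType.sign (7 - 8 * (c : ℝ)) := by
  have hpos : 0 < (6 + c - 4 * t1 : ℝ) / 24 := by linarith [c.2.1, t1.2.2]
  rw [V1p_act2_sub_act1_of_isThreshold hs, mul_div_assoc, sign_mul, sign_pos hpos, mul_one]

end Threshold

/-- **Claim.**  In the example game, each player's interim payoff satisfies the single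
crossing condition in (own action, own type) against any monotone strategy of the opponent. -/
theorem example1_singleCrossing :
    (∀ s2 : T01 → Act12, Measurable s2 → Monotone s2 →
      SingleCrossing fun (a : Act12) (t1 : T01) => V1p a t1 s2) ∧
    (∀ s1 : T01 → Act12, Measurable s1 → Monotone s1 →
      SingleCrossing fun (a : Act12) (t2 : T01) => V2p a t2 s1) := by
  refine ⟨fun s2 _ hs2 => ?_, fun s1 _ _ => ?_⟩
  · obtain ⟨c, hc⟩ := exists_isThreshold_of_monotone hs2
    refine singleCrossing_of_sign_sub_eq fun a a' ha _ _ => ?_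
    obtain ⟨rfl, rfl⟩ := act_lt_iff.mp ha
    rw [sign_V1p_act2_sub_act1_of_isThreshold hc, sign_V1p_act2_sub_act1_of_isThreshold hc]
  · exact singleCrossing_of_sign_sub_eq fun _ _ _ _ _ => rfl

end

end MonotonePerfection
end
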